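/- arXiv:math/0512098 — 2 statements merged into one kernel-verified Lean document; each statement's English description precedes it below -/
import Mathlib

section
/- Let α ≤ −1 (α finite) and let f : ℝ → ℝ be a nonnegative α-concave function with f ∈ L¹(ℝ). Then ∫_ℝ Δ_α f(x) dx ≤ 2^{−1/α} ∫_ℝ f(x) dx. -/
open MeasureTheory Set
open scoped ENNReal

/-- The `α`-mean (for `α < 0`) of two nonnegative reals:
`M_α(a,b;t) = (t a^α + (1−t) b^α)^{1/α}` if `a, b > 0`, and `0` if `a = 0` or `b = 0`. -/
noncomputable def Malpha (α a b t : ℝ) : ℝ :=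
  if 0 < a ∧ 0 < b then (t * a ^ α + (1 - t) * b ^ α) ^ (1 / α) else 0

/-- A nonnegative `f : ℝ → ℝ` is `α`-concave if
`f(t x + (1−t) y) ≥ M_α(f(x), f(y); t)` for all `x, y` and `t ∈ [0,1]`. -/
def AlphaConcave1 (α : ℝ) (f : ℝ → ℝ) : Prop :=
  ∀ x y : ℝ, ∀ t : ℝ, t ∈ Set.Icc (0 : ℝ) 1 →
    Malpha α (f x) (f y) t ≤ f (t * x + (1 - t) * y)

/-- The `α`-difference function of `f : ℝ → ℝ`:
`Δ_α f(z) = sup { M_α(f(x), f(−y); 1/2) : (x+y)/2 = z }`, valued in `[0,∞]`. -/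
noncomputable def diffAlpha1 (α : ℝ) (f : ℝ → ℝ) (z : ℝ) : ℝ≥0∞ :=
  sSup {r : ℝ≥0∞ | ∃ x y : ℝ, (x + y) / 2 = z ∧
    r = ENNReal.ofReal (Malpha α (f x) (f (-y)) (1 / 2))}

/-! ### Auxiliary lemmas -/

/-- For `α < 0`, the `α`-mean of two positive numbers is at least their minimum. -/
lemma min_le_Malpha {α a b t : ℝ} (hα : α < 0) (ha : 0 < a) (hb : 0 < b)
    (ht : t ∈ Set.Icc (0 : ℝ) 1) : min a b ≤ Malpha α a b t := by
  rw [Malpha, if_pos ⟨ha, hb⟩]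
  set m := min a b with hm
  have hm0 : 0 < m := lt_min ha hb
  have hA : (0:ℝ) < a ^ α := Real.rpow_pos_of_pos ha α
  have hB : (0:ℝ) < b ^ α := Real.rpow_pos_of_pos hb α
  have h1 : a ^ α ≤ m ^ α := Real.rpow_le_rpow_of_nonpos hm0 (min_le_left a b) hα.le
  have h2 : b ^ α ≤ m ^ α := Real.rpow_le_rpow_of_nonpos hm0 (min_le_right a b) hα.le
  have ht0 := ht.1
  have ht1 := ht.2
  have p1 : 0 ≤ t * (m ^ α - a ^ α) := mul_nonneg ht0 (sub_nonneg.mpr h1)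
  have p2 : 0 ≤ (1 - t) * (m ^ α - b ^ α) :=
    mul_nonneg (by linarith) (sub_nonneg.mpr h2)
  have hmax : t * a ^ α + (1 - t) * b ^ α ≤ m ^ α := by nlinarith
  have q1 : 0 ≤ t * (a ^ α - min (a ^ α) (b ^ α)) :=
    mul_nonneg ht0 (sub_nonneg.mpr (min_le_left _ _))
  have q2 : 0 ≤ (1 - t) * (b ^ α - min (a ^ α) (b ^ α)) :=
    mul_nonneg (by linarith) (sub_nonneg.mpr (min_le_right _ _))
  have qC : 0 < min (a ^ α) (b ^ α) := lt_min hA hB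
  have hpos : 0 < t * a ^ α + (1 - t) * b ^ α := by nlinarith
  have hmono := Real.rpow_le_rpow_of_nonpos hpos hmax (le_of_lt (one_div_neg.mpr hα))
  have hid : (m ^ α) ^ (1 / α) = m := by
    rw [← Real.rpow_mul hm0.le, mul_one_div_cancel hα.ne, Real.rpow_one]
  calc m = (m ^ α) ^ (1 / α) := hid.symm
    _ ≤ (t * a ^ α + (1 - t) * b ^ α) ^ (1 / α) := hmono

/-- For `α < 0`, the `α`-mean at `t = 1/2` is at most `2^{-1/α}` times the minimum. -/
lemma Malpha_le_min {α a b : ℝ} (hα : α < 0) (ha : 0 ≤ a) (hb : 0 ≤ b) :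
    Malpha α a b (1 / 2) ≤ 2 ^ (-1 / α) * min a b := by
  rw [Malpha]
  split_ifs with h
  · obtain ⟨ha', hb'⟩ := h
    set m := min a b with hm
    have hm0 : 0 < m := lt_min ha' hb'
    have hA : (0:ℝ) < a ^ α := Real.rpow_pos_of_pos ha' α
    have hB : (0:ℝ) < b ^ α := Real.rpow_pos_of_pos hb' α
    have hsum : m ^ α ≤ a ^ α + b ^ α := by
      rcases min_cases a b with ⟨hmv, _⟩ | ⟨hmv, _⟩ <;> rw [← hm] at hmv <;> rw [hmv] <;> linarith
    have hmm : m ^ α * (1/2) ≤ 1/2 * a ^ α + (1 - 1/2) * b ^ α := by linarith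
    have hpos : (0:ℝ) < m ^ α * (1/2) := by positivity
    have hmono := Real.rpow_le_rpow_of_nonpos hpos hmm (le_of_lt (one_div_neg.mpr hα))
    have hid : (m ^ α * (1/2)) ^ (1 / α) = 2 ^ (-1 / α) * m := by
      rw [Real.mul_rpow (by positivity) (by norm_num),
        ← Real.rpow_mul hm0.le, mul_one_div_cancel hα.ne, Real.rpow_one]
      have : ((1:ℝ)/2) ^ (1/α) = 2 ^ (-1/α) := by
        rw [one_div (2:ℝ), Real.inv_rpow (by norm_num : (0:ℝ) ≤ 2), neg_div,
          Real.rpow_neg (by norm_num : (0:ℝ) ≤ 2)]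
      rw [this]; ring
    calc (1/2 * a ^ α + (1 - 1/2) * b ^ α) ^ (1/α)
        ≤ (m ^ α * (1/2)) ^ (1 / α) := hmono
      _ = 2 ^ (-1 / α) * m := hid
  · exact mul_nonneg (Real.rpow_nonneg (by norm_num) _) (le_min ha hb)

/-- Superlevel sets of an `α`-concave function (above a nonnegative level) are convex. -/
lemma convex_superlevel {α : ℝ} (hα : α < 0) {f : ℝ → ℝ} (hf : AlphaConcave1 α f)
    {t : ℝ} (ht : 0 ≤ t) : Convex ℝ {x | t < f x} := by
  intro u hu v hv p q hp hq hpq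
  simp only [mem_setOf_eq] at hu hv ⊢
  have hq' : q = 1 - p := by linarith
  have h1 := hf u v p ⟨hp, by linarith⟩
  have h2 := min_le_Malpha hα (lt_of_le_of_lt ht hu) (lt_of_le_of_lt ht hv)
    (⟨hp, by linarith⟩ : p ∈ Set.Icc (0:ℝ) 1)
  have : t < f (p * u + (1 - p) * v) :=
    lt_of_lt_of_le (lt_min hu hv) (h2.trans h1)
  simpa [smul_eq_mul, hq'] using this

/-- The sup of `min (f x) (f (-y))` over decompositions `(x+y)/2 = z`. -/
noncomputable def minSup (f : ℝ → ℝ) (z : ℝ) : ℝ≥0∞ :=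
  sSup {r : ℝ≥0∞ | ∃ x y : ℝ, (x + y) / 2 = z ∧ r = ENNReal.ofReal (min (f x) (f (-y)))}

lemma minSup_level (f : ℝ → ℝ) {t : ℝ} (ht : 0 ≤ t) :
    {z | ENNReal.ofReal t < minSup f z}
      = (fun p : ℝ × ℝ => (p.1 - p.2) / 2) '' ({x | t < f x} ×ˢ {x | t < f x}) := by
  ext z
  simp only [mem_setOf_eq, mem_image, mem_prod, Prod.exists]
  constructor
  · intro hz
    rw [minSup, lt_sSup_iff] at hz
    obtain ⟨r, ⟨x, y, hxy, rfl⟩, hr⟩ := hz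
    have hmin : t < min (f x) (f (-y)) := by
      by_contra hcon
      push_neg at hcon
      exact absurd hr (not_lt.mpr (ENNReal.ofReal_le_ofReal hcon))
    exact ⟨x, -y, ⟨lt_of_lt_of_le hmin (min_le_left _ _), lt_of_lt_of_le hmin (min_le_right _ _)⟩,
      by rw [← hxy]; ring⟩
  · rintro ⟨u, v, ⟨hu, hv⟩, rfl⟩
    have hmem : ENNReal.ofReal (min (f u) (f v)) ∈
        {r : ℝ≥0∞ | ∃ x y : ℝ, (x + y) / 2 = (u - v) / 2 ∧
          r = ENNReal.ofReal (min (f x) (f (-y)))} :=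
      ⟨u, -v, by ring, by rw [neg_neg]⟩
    exact lt_of_lt_of_le ((ENNReal.ofReal_lt_ofReal_iff_of_nonneg ht).mpr (lt_min hu hv))
      (le_sSup hmem)

lemma convex_symm_image {A : Set ℝ} (hA : Convex ℝ A) :
    Convex ℝ ((fun p : ℝ × ℝ => (p.1 - p.2) / 2) '' (A ×ˢ A)) := by
  rintro _ ⟨⟨u1, v1⟩, ⟨hu1, hv1⟩, rfl⟩ _ ⟨⟨u2, v2⟩, ⟨hu2, hv2⟩, rfl⟩ p q hp hq hpq
  refine ⟨(p * u1 + q * u2, p * v1 + q * v2), ⟨?_, ?_⟩, ?_⟩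
  · simpa [smul_eq_mul] using hA hu1 hu2 hp hq hpq
  · simpa [smul_eq_mul] using hA hv1 hv2 hp hq hpq
  · simp only [smul_eq_mul]; ring

lemma volume_symm_image_le {A : Set ℝ} (hA : Convex ℝ A) :
    volume ((fun p : ℝ × ℝ => (p.1 - p.2) / 2) '' (A ×ˢ A)) ≤ volume A := by
  rcases A.eq_empty_or_nonempty with h | hne
  · simp [h]
  obtain ⟨a, ha⟩ := hne
  by_cases hub : BddAbove A
  · by_cases hlb : BddBelow A
    · set p := sInf A with hp
      set q := sSup A with hq
      have himg : (fun p : ℝ × ℝ => (p.1 - p.2) / 2) '' (A ×ˢ A)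
          ⊆ Icc ((p - q) / 2) ((q - p) / 2) := by
        rintro _ ⟨⟨u, v⟩, ⟨hu, hv⟩, rfl⟩
        have h1 : p ≤ u := csInf_le hlb hu
        have h2 : u ≤ q := le_csSup hub hu
        have h3 : p ≤ v := csInf_le hlb hv
        have h4 : v ≤ q := le_csSup hub hv
        constructor
        · simp only; linarith
        · simp only; linarith
      have hioo : Ioo p q ⊆ A := by
        intro x hx
        obtain ⟨c, hc, hcx⟩ := exists_lt_of_csInf_lt ⟨a, ha⟩ hx.1
        obtain ⟨d, hd, hxd⟩ := exists_lt_of_lt_csSup ⟨a, ha⟩ hx.2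
        exact hA.ordConnected.out hc hd ⟨hcx.le, hxd.le⟩
      calc volume ((fun p : ℝ × ℝ => (p.1 - p.2) / 2) '' (A ×ˢ A))
          ≤ volume (Icc ((p - q) / 2) ((q - p) / 2)) := measure_mono himg
        _ = ENNReal.ofReal (q - p) := by rw [Real.volume_Icc]; congr 1; ring
        _ = volume (Ioo p q) := (Real.volume_Ioo).symm
        _ ≤ volume A := measure_mono hioo
    · have hsub : Iic a ⊆ A := by
        intro x hx
        obtain ⟨b, hb, hxb⟩ := not_bddBelow_iff.mp hlb x
        exact hA.ordConnected.out hb ha ⟨hxb.le, hx⟩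
      have : volume A = ∞ := top_le_iff.mp (Real.volume_Iic (a := a) ▸ measure_mono hsub)
      rw [this]; exact le_top
  · have hsub : Ici a ⊆ A := by
      intro x hx
      obtain ⟨b, hb, hxb⟩ := not_bddAbove_iff.mp hub x
      exact hA.ordConnected.out ha hb ⟨hx, hxb.le⟩
    have : volume A = ∞ := top_le_iff.mp (Real.volume_Ici (a := a) ▸ measure_mono hsub)
    rw [this]; exact le_top

lemma measurable_minSup {α : ℝ} (hα : α < 0) {f : ℝ → ℝ} (hf : AlphaConcave1 α f) :
    Measurable (minSup f) := by
  apply measurable_of_Ioi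
  intro x
  rcases eq_or_ne x ⊤ with rfl | hx
  · have : minSup f ⁻¹' Ioi ⊤ = ∅ := by
      ext z; simp [not_top_lt]
    rw [this]; exact MeasurableSet.empty
  · have hset : minSup f ⁻¹' Ioi x = {z | ENNReal.ofReal x.toReal < minSup f z} := by
      rw [ENNReal.ofReal_toReal hx]; rfl
    rw [hset, minSup_level f ENNReal.toReal_nonneg]
    exact ((convex_symm_image (convex_superlevel hα hf ENNReal.toReal_nonneg)).ordConnected).measurableSet

lemma diffAlpha1_le_minSup {α : ℝ} (hα : α < 0) {f : ℝ → ℝ} (hf0 : ∀ x, 0 ≤ f x) (z : ℝ) :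
    diffAlpha1 α f z ≤ (2 : ℝ≥0∞) ^ (-1 / α) * minSup f z := by
  apply sSup_le
  rintro r ⟨x, y, hxy, rfl⟩
  have hle := Malpha_le_min (a := f x) (b := f (-y)) hα (hf0 x) (hf0 (-y))
  calc ENNReal.ofReal (Malpha α (f x) (f (-y)) (1 / 2))
      ≤ ENNReal.ofReal (2 ^ (-1 / α) * min (f x) (f (-y))) := ENNReal.ofReal_le_ofReal hle
    _ = (2 : ℝ≥0∞) ^ (-1 / α) * ENNReal.ofReal (min (f x) (f (-y))) := by
        rw [ENNReal.ofReal_mul (Real.rpow_nonneg (by norm_num) _),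
          ← ENNReal.ofReal_rpow_of_pos (by norm_num : (0:ℝ) < 2)]
        norm_num
    _ ≤ (2 : ℝ≥0∞) ^ (-1 / α) * minSup f z := by
        refine mul_le_mul_right (le_sSup ?_) _
        exact ⟨x, y, hxy, rfl⟩

/-- For finite `α ≤ −1` and a nonnegative `α`-concave `f ∈ L¹(ℝ)`,
`∫ Δ_α f ≤ 2^{−1/α} ∫ f`. -/
theorem lintegral_diffAlpha1_le (α : ℝ) (hα : α ≤ -1)
    (f : ℝ → ℝ) (hf0 : ∀ x, 0 ≤ f x) (hf : AlphaConcave1 α f)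
    (hint : Integrable f) :
    ∫⁻ x, diffAlpha1 α f x ≤
      (2 : ℝ≥0∞) ^ (-1 / α) * ∫⁻ x, ENNReal.ofReal (f x) := by
  have hα0 : α < 0 := lt_of_le_of_lt hα (by norm_num)
  have hmeas : Measurable (minSup f) := measurable_minSup hα0 hf
  have step2 : ∫⁻ x, minSup f x ≤ ∫⁻ x, ENNReal.ofReal (f x) := by
    set h := minSup f with hh
    have hms : ∀ n : ℕ, Measurable fun z => min (h z) (n : ℝ≥0∞) :=
      fun n => hmeas.min measurable_const
    have hmono : Monotone fun (n : ℕ) (z : ℝ) => min (h z) (n : ℝ≥0∞) := by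
      intro m n hmn z
      exact min_le_min le_rfl (by exact_mod_cast hmn)
    have hsup : ∀ z, (⨆ n : ℕ, min (h z) (n : ℝ≥0∞)) = h z := by
      intro z
      refine le_antisymm (iSup_le fun n => min_le_left _ _) ?_
      rcases eq_or_ne (h z) ⊤ with hz | hz
      · rw [hz]
        have : (⨆ n : ℕ, min (⊤ : ℝ≥0∞) (n : ℝ≥0∞)) = ⨆ n : ℕ, (n : ℝ≥0∞) := by
          simp [min_eq_right (le_top : (_ : ℝ≥0∞) ≤ ⊤)]
        rw [this, ENNReal.iSup_natCast]
      · obtain ⟨n, hn⟩ := ENNReal.exists_nat_gt hz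
        have heq : h z = min (h z) (n : ℝ≥0∞) := (min_eq_left hn.le).symm
        exact heq.le.trans (le_iSup (fun n : ℕ => min (h z) (n : ℝ≥0∞)) n)
    have e1 : ∫⁻ z, h z = ⨆ n : ℕ, ∫⁻ z, min (h z) (n : ℝ≥0∞) := by
      rw [← lintegral_iSup hms hmono]
      exact lintegral_congr fun z => (hsup z).symm
    rw [e1]
    apply iSup_le
    intro n
    have hne : ∀ z, min (h z) (n : ℝ≥0∞) ≠ ⊤ :=
      fun z => ne_top_of_le_ne_top (ENNReal.natCast_ne_top n) (min_le_right _ _)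
    have e2 : ∫⁻ z, min (h z) (n : ℝ≥0∞)
        = ∫⁻ z, ENNReal.ofReal ((min (h z) (n : ℝ≥0∞)).toReal) :=
      lintegral_congr fun z => (ENNReal.ofReal_toReal (hne z)).symm
    rw [e2, lintegral_eq_lintegral_meas_lt volume
      (Filter.Eventually.of_forall fun z => ENNReal.toReal_nonneg)
      ((hms n).ennreal_toReal.aemeasurable),
      lintegral_eq_lintegral_meas_lt volume (f := f)
      (Filter.Eventually.of_forall hf0) hint.aemeasurable]
    apply lintegral_mono_ae
    filter_upwards [self_mem_ae_restrict measurableSet_Ioi] with t ht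
    have ht0 : (0:ℝ) < t := ht
    have hsub : {a : ℝ | t < (min (h a) (n : ℝ≥0∞)).toReal}
        ⊆ {z | ENNReal.ofReal t < h z} := by
      intro a ha
      have h1 : ENNReal.ofReal t < min (h a) (n : ℝ≥0∞) :=
        (ENNReal.ofReal_lt_iff_lt_toReal ht0.le (hne a)).mpr ha
      exact lt_of_lt_of_le h1 (min_le_left _ _)
    calc volume {a : ℝ | t < (min (h a) (n : ℝ≥0∞)).toReal}
        ≤ volume {z | ENNReal.ofReal t < h z} := measure_mono hsub
      _ = volume ((fun p : ℝ × ℝ => (p.1 - p.2) / 2)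
            '' ({x | t < f x} ×ˢ {x | t < f x})) := by rw [hh, minSup_level f ht0.le]
      _ ≤ volume {x | t < f x} :=
          volume_symm_image_le (convex_superlevel hα0 hf ht0.le)
  calc ∫⁻ x, diffAlpha1 α f x
      ≤ ∫⁻ x, (2 : ℝ≥0∞) ^ (-1 / α) * minSup f x :=
        lintegral_mono fun z => diffAlpha1_le_minSup hα0 hf0 z
    _ = (2 : ℝ≥0∞) ^ (-1 / α) * ∫⁻ x, minSup f x := lintegral_const_mul _ hmeas
    _ ≤ (2 : ℝ≥0∞) ^ (-1 / α) * ∫⁻ x, ENNReal.ofReal (f x) := mul_le_mul_right step2 _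
end

section
/- Let α < 0 and let f : ℝ → ℝ be a nonnegative α-concave function with f ∈ L¹(ℝ). Define f* : ℝ → ℝ by f*(z) = sup_{x ∈ ℝ} min(f(x), f(x − z)) for z ≥ 0 and f*(z) = 0 for z < 0. Then: (i) f* is α-concave; (ii) for every s ≥ 0 the sets {z : f*(z) > s} and {z : f(z) > s} have the same Lebesgue measure, and consequently ∫_ℝ f* dz = ∫_ℝ f dz; (iii) Δ_α f*(z) ≥ Δ_α f(z) for every z ∈ ℝ. -/
open MeasureTheory Set
open scoped ENNReal

/-- The `α`-mean on `[0,∞]`, extending `M_α` to infinite values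
(`∞^α = 0` and `0^α = ∞` for `α < 0` are built into `ENNReal` rpow). -/
noncomputable def eMalpha (α : ℝ) (a b : ℝ≥0∞) (t : ℝ) : ℝ≥0∞ :=
  (ENNReal.ofReal t * a ^ α + ENNReal.ofReal (1 - t) * b ^ α) ^ (1 / α)

/-- The `α`-difference function of a `[0,∞]`-valued `g : ℝ → [0,∞]`. -/
noncomputable def ediffAlpha1 (α : ℝ) (g : ℝ → ℝ≥0∞) (z : ℝ) : ℝ≥0∞ :=
  sSup {r : ℝ≥0∞ | ∃ x y : ℝ, (x + y) / 2 = z ∧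
    r = eMalpha α (g x) (g (-y)) (1 / 2)}

/-- The decreasing rearrangement `f*` of `f`:
`f*(z) = sup_x min(f(x), f(x − z))` for `z ≥ 0` and `f*(z) = 0` for `z < 0`,
valued in `[0,∞]`. -/
noncomputable def fstar (f : ℝ → ℝ) (z : ℝ) : ℝ≥0∞ :=
  if 0 ≤ z then ⨆ x : ℝ, ENNReal.ofReal (min (f x) (f (x - z))) else 0

/-! For `s ≥ 0` the superlevel set `A_s = {f > s}` is an interval, because `M_α(a, b; t) ≥ min a b`,
and `{f* > s} = [0, ∞) ∩ (A_s - A_s)` is an interval of the same length; equal distribution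
functions give equal integrals by the layer-cake formula.

For α-concavity, `f*(x)` and `f*(y)` are suprema of `min (f u) (f (u - x))`; the α-mean is
monotone and continuous on `[0, ∞]`, so it commutes with these suprema, and α-concavity of `f`
applied to the pairs `(u, v)` and `(u - x, v - y)` bounds each term by `f*(t x + (1 - t) y)`.

For `Δ_α`, a pair `(x, y)` with `x + y ≥ 0` is dominated by `(x + y, 0)` (and otherwise by
`(0, x + y)`): `f*(x + y) ≥ min (f x) (f (-y))`, `f*(0) ≥ max (f x) (f (-y))`, and `M_α(·, ·; 1/2)`
is symmetric. -/

open scoped Pointwise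

theorem ENNReal.rpow_le_rpow_of_nonpos {x y : ℝ≥0∞} {z : ℝ} (hxy : x ≤ y) (hz : z ≤ 0) :
    y ^ z ≤ x ^ z := by
  have h := ENNReal.rpow_le_rpow hxy (neg_nonneg.2 hz)
  rw [ENNReal.rpow_neg, ENNReal.rpow_neg] at h
  exact ENNReal.inv_le_inv.1 h

section eMalpha

variable {α : ℝ}

theorem eMalpha_weight_zero (hα : α ≠ 0) (a b : ℝ≥0∞) : eMalpha α a b 0 = b := by
  simp [eMalpha, ← ENNReal.rpow_mul, hα]

theorem eMalpha_weight_one (hα : α ≠ 0) (a b : ℝ≥0∞) : eMalpha α a b 1 = a := by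
  simp [eMalpha, ← ENNReal.rpow_mul, hα]

theorem eMalpha_self (hα : α ≠ 0) {t : ℝ} (ht : t ∈ Icc (0 : ℝ) 1) (a : ℝ≥0∞) :
    eMalpha α a a t = a := by
  rw [eMalpha, ← add_mul, ← ENNReal.ofReal_add ht.1 (sub_nonneg.2 ht.2), add_sub_cancel,
    ENNReal.ofReal_one, one_mul, ← ENNReal.rpow_mul, mul_one_div_cancel hα, ENNReal.rpow_one]

theorem eMalpha_zero_left (hα : α < 0) {t : ℝ} (ht : 0 < t) (b : ℝ≥0∞) :
    eMalpha α 0 b t = 0 := by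
  simp [eMalpha, ENNReal.zero_rpow_of_neg hα, ht, hα]

theorem eMalpha_zero_right (hα : α < 0) {t : ℝ} (ht : t < 1) (a : ℝ≥0∞) :
    eMalpha α a 0 t = 0 := by
  simp [eMalpha, ENNReal.zero_rpow_of_neg hα, ht, hα]

theorem eMalpha_comm_half (α : ℝ) (a b : ℝ≥0∞) :
    eMalpha α a b (1 / 2) = eMalpha α b a (1 / 2) := by
  norm_num [eMalpha, add_comm]

theorem eMalpha_mono (hα : α < 0) {a a' b b' : ℝ≥0∞} (ha : a ≤ a') (hb : b ≤ b') (t : ℝ) :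
    eMalpha α a b t ≤ eMalpha α a' b' t :=
  ENNReal.rpow_le_rpow_of_nonpos
    (add_le_add (mul_le_mul_right (ENNReal.rpow_le_rpow_of_nonpos ha hα.le) _)
      (mul_le_mul_right (ENNReal.rpow_le_rpow_of_nonpos hb hα.le) _))
    (one_div_neg.2 hα).le

theorem min_le_eMalpha (hα : α < 0) {t : ℝ} (ht : t ∈ Icc (0 : ℝ) 1) (a b : ℝ≥0∞) :
    min a b ≤ eMalpha α a b t :=
  calc min a b = eMalpha α (min a b) (min a b) t := (eMalpha_self hα.ne ht _).symm
    _ ≤ eMalpha α a b t := eMalpha_mono hα (min_le_left a b) (min_le_right a b) t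

theorem eMalpha_half_le (hα : α < 0) {a b c d : ℝ≥0∞} (hc : min a b ≤ c) (hd : max a b ≤ d) :
    eMalpha α a b (1 / 2) ≤ eMalpha α c d (1 / 2) := by
  rcases le_total a b with h | h
  · exact eMalpha_mono hα (min_eq_left h ▸ hc) (max_eq_right h ▸ hd) _
  · rw [eMalpha_comm_half]
    exact eMalpha_mono hα (min_eq_right h ▸ hc) (max_eq_left h ▸ hd) _

theorem continuous_eMalpha (α t : ℝ) : Continuous fun p : ℝ≥0∞ × ℝ≥0∞ ↦ eMalpha α p.1 p.2 t :=
  ENNReal.continuous_rpow_const.comp <|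
    ((ENNReal.continuous_const_mul ENNReal.ofReal_ne_top).comp
        (ENNReal.continuous_rpow_const.comp continuous_fst)).add
      ((ENNReal.continuous_const_mul ENNReal.ofReal_ne_top).comp
        (ENNReal.continuous_rpow_const.comp continuous_snd))

theorem eMalpha_iSup_left (hα : α < 0) {ι : Sort*} [Nonempty ι] (g : ι → ℝ≥0∞) (b : ℝ≥0∞)
    (t : ℝ) : eMalpha α (⨆ i, g i) b t = ⨆ i, eMalpha α (g i) b t :=
  Monotone.map_ciSup_of_continuousAt (f := fun a ↦ eMalpha α a b t)
    ((continuous_eMalpha α t).comp (Continuous.prodMk_left b)).continuousAt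
    fun _ _ h ↦ eMalpha_mono hα h le_rfl t

theorem eMalpha_iSup_right (hα : α < 0) {ι : Sort*} [Nonempty ι] (a : ℝ≥0∞) (g : ι → ℝ≥0∞)
    (t : ℝ) : eMalpha α a (⨆ i, g i) t = ⨆ i, eMalpha α a (g i) t :=
  Monotone.map_ciSup_of_continuousAt (f := fun b ↦ eMalpha α a b t)
    ((continuous_eMalpha α t).comp (Continuous.prodMk_right a)).continuousAt
    fun _ _ h ↦ eMalpha_mono hα le_rfl h t

-- Only for `0 < t < 1`: at `t = 0`, `ENNReal`'s `0 * ⊤ = 0` gives `eMalpha α 0 b 0 = b`,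
-- while `Malpha α 0 b 0 = 0`.
theorem ofReal_Malpha (hα : α < 0) {t : ℝ} (ht : t ∈ Ioo (0 : ℝ) 1) (a b : ℝ) :
    ENNReal.ofReal (Malpha α a b t) = eMalpha α (ENNReal.ofReal a) (ENNReal.ofReal b) t := by
  unfold Malpha
  split_ifs with hab
  · obtain ⟨ha, hb⟩ := hab
    have h1t : 0 < 1 - t := sub_pos.2 ht.2
    have hta : 0 < t * a ^ α := mul_pos ht.1 (Real.rpow_pos_of_pos ha α)
    have htb : 0 < (1 - t) * b ^ α := mul_pos h1t (Real.rpow_pos_of_pos hb α)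
    rw [← ENNReal.ofReal_rpow_of_pos (add_pos hta htb), ENNReal.ofReal_add hta.le htb.le,
      ENNReal.ofReal_mul ht.1.le, ENNReal.ofReal_mul h1t.le, ← ENNReal.ofReal_rpow_of_pos ha,
      ← ENNReal.ofReal_rpow_of_pos hb, eMalpha]
  · rw [ENNReal.ofReal_zero]
    rcases not_and_or.1 hab with ha | hb
    · rw [ENNReal.ofReal_of_nonpos (not_lt.1 ha), eMalpha_zero_left hα ht.1]
    · rw [ENNReal.ofReal_of_nonpos (not_lt.1 hb), eMalpha_zero_right hα ht.2]

end eMalpha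

def EAlphaConcave (α : ℝ) (g : ℝ → ℝ≥0∞) : Prop :=
  ∀ x y : ℝ, ∀ t ∈ Icc (0 : ℝ) 1, eMalpha α (g x) (g y) t ≤ g (t * x + (1 - t) * y)

section EAlphaConcave

variable {α : ℝ} {g : ℝ → ℝ≥0∞} {f : ℝ → ℝ}

theorem EAlphaConcave.convex_setOf_lt (hα : α < 0) (hg : EAlphaConcave α g) (c : ℝ≥0∞) :
    Convex ℝ {x | c < g x} := by
  intro x hx y hy a b ha hb hab
  obtain rfl : b = 1 - a := by linarith
  have ht : a ∈ Icc (0 : ℝ) 1 := ⟨ha, by linarith⟩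
  exact (lt_min hx hy).trans_le ((min_le_eMalpha hα ht _ _).trans (hg x y a ht))

theorem EAlphaConcave.measurable (hα : α < 0) (hg : EAlphaConcave α g) : Measurable g :=
  measurable_of_Ioi fun c ↦
    (convex_iff_ordConnected.1 (hg.convex_setOf_lt hα c)).measurableSet

theorem AlphaConcave1.eAlphaConcave_ofReal (hα : α < 0) (hf : AlphaConcave1 α f) :
    EAlphaConcave α fun x ↦ ENNReal.ofReal (f x) := by
  intro x y t ht
  rcases ht.1.eq_or_lt with rfl | h0
  · simp [eMalpha_weight_zero hα.ne]
  rcases ht.2.eq_or_lt with rfl | h1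
  · simp [eMalpha_weight_one hα.ne]
  rw [← ofReal_Malpha hα ⟨h0, h1⟩]
  exact ENNReal.ofReal_le_ofReal (hf x y t ht)

theorem AlphaConcave1.ordConnected_setOf_lt (hα : α < 0) (hf : AlphaConcave1 α f) {s : ℝ}
    (hs : 0 ≤ s) : {x | s < f x}.OrdConnected := by
  have h := (hf.eAlphaConcave_ofReal hα).convex_setOf_lt hα (ENNReal.ofReal s)
  simp only [ENNReal.ofReal_lt_ofReal_iff_of_nonneg hs] at h
  exact convex_iff_ordConnected.1 h

end EAlphaConcave

section fstar

variable {α : ℝ}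

theorem fstar_of_neg (f : ℝ → ℝ) {z : ℝ} (hz : z < 0) : fstar f z = 0 :=
  if_neg hz.not_ge

theorem le_fstar (f : ℝ → ℝ) {a b : ℝ} (h : 0 ≤ a - b) :
    ENNReal.ofReal (min (f a) (f b)) ≤ fstar f (a - b) := by
  rw [fstar, if_pos h]
  exact le_iSup_of_le a (by rw [sub_sub_cancel])

theorem le_fstar_zero (f : ℝ → ℝ) (a : ℝ) : ENNReal.ofReal (f a) ≤ fstar f 0 := by
  simpa using le_fstar f (le_of_eq (sub_self a).symm)

theorem setOf_ofReal_lt_fstar (f : ℝ → ℝ) {s : ℝ} (hs : 0 ≤ s) :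
    {z | ENNReal.ofReal s < fstar f z} = Ici 0 ∩ ({x | s < f x} - {x | s < f x}) := by
  ext z
  simp only [fstar, mem_ofPred_eq, mem_inter_iff, mem_Ici, mem_sub]
  split_ifs with hz
  · simp only [lt_iSup_iff, ENNReal.ofReal_lt_ofReal_iff_of_nonneg hs, lt_min_iff, hz, true_and]
    constructor
    · rintro ⟨u, hu, huz⟩
      exact ⟨u, hu, u - z, huz, sub_sub_cancel u z⟩
    · rintro ⟨a, ha, b, hb, rfl⟩
      exact ⟨a, ha, by rwa [sub_sub_cancel]⟩
  · simp [hz]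

theorem fstar_eAlphaConcave (hα : α < 0) {f : ℝ → ℝ} (hf : AlphaConcave1 α f) :
    EAlphaConcave α (fstar f) := by
  intro x y t ht
  rcases ht.1.eq_or_lt with rfl | h0
  · simp [eMalpha_weight_zero hα.ne]
  rcases ht.2.eq_or_lt with rfl | h1
  · simp [eMalpha_weight_one hα.ne]
  rcases lt_or_ge x 0 with hx | hx
  · rw [fstar_of_neg f hx, eMalpha_zero_left hα h0]
    exact zero_le
  rcases lt_or_ge y 0 with hy | hy
  · rw [fstar_of_neg f hy, eMalpha_zero_right hα h1]
    exact zero_le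
  rw [fstar, fstar, if_pos hx, if_pos hy, eMalpha_iSup_left hα]
  refine iSup_le fun u ↦ ?_
  rw [eMalpha_iSup_right hα]
  refine iSup_le fun v ↦ ?_
  have hlift := hf.eAlphaConcave_ofReal hα
  have hz : t * u + (1 - t) * v - (t * (u - x) + (1 - t) * (v - y)) = t * x + (1 - t) * y := by
    ring
  calc eMalpha α (ENNReal.ofReal (min (f u) (f (u - x))))
        (ENNReal.ofReal (min (f v) (f (v - y)))) t
      ≤ min (eMalpha α (ENNReal.ofReal (f u)) (ENNReal.ofReal (f v)) t)
          (eMalpha α (ENNReal.ofReal (f (u - x))) (ENNReal.ofReal (f (v - y))) t) := by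
        simp only [ENNReal.ofReal_min]
        exact le_min (eMalpha_mono hα (min_le_left _ _) (min_le_left _ _) t)
          (eMalpha_mono hα (min_le_right _ _) (min_le_right _ _) t)
    _ ≤ ENNReal.ofReal
          (min (f (t * u + (1 - t) * v)) (f (t * (u - x) + (1 - t) * (v - y)))) := by
        rw [ENNReal.ofReal_min]
        exact min_le_min (hlift u v t ht) (hlift _ _ t ht)
    _ ≤ fstar f (t * x + (1 - t) * y) :=
        hz ▸ le_fstar f
          (hz ▸ add_nonneg (mul_nonneg ht.1 hx) (mul_nonneg (sub_nonneg.2 ht.2) hy))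

theorem diffAlpha1_le_ediffAlpha1_fstar (hα : α < 0) (f : ℝ → ℝ) (z : ℝ) :
    diffAlpha1 α f z ≤ ediffAlpha1 α (fstar f) z := by
  refine sSup_le ?_
  rintro _ ⟨x, y, hxy, rfl⟩
  rw [ofReal_Malpha hα ⟨by norm_num, by norm_num⟩]
  have hmax := max_le (le_fstar_zero f x) (le_fstar_zero f (-y))
  rcases le_total 0 (x + y) with h | h
  · refine le_sSup_of_le ⟨x + y, 0, by linarith, rfl⟩
      (eMalpha_half_le hα ?_ (by simpa using hmax))
    rw [← ENNReal.ofReal_min, ← sub_neg_eq_add]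
    exact le_fstar f (by linarith)
  · refine le_sSup_of_le ⟨0, x + y, by linarith, rfl⟩ ?_
    rw [eMalpha_comm_half α (fstar f 0)]
    refine eMalpha_half_le hα ?_ hmax
    rw [← ENNReal.ofReal_min, min_comm, show -(x + y) = -y - x by ring]
    exact le_fstar f (by linarith)

end fstar

theorem Set.OrdConnected.volume_eq_iSup_sub {A : Set ℝ} (hA : A.OrdConnected) :
    volume A = ⨆ a ∈ A, ⨆ b ∈ A, ENNReal.ofReal (a - b) := by
  refine le_antisymm ((Real.volume_le_diam A).trans (Metric.ediam_le fun a ha b hb ↦ ?_))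
    (iSup₂_le fun a ha ↦ iSup₂_le fun b hb ↦ ?_)
  · rw [edist_dist, Real.dist_eq]
    rcases le_total b a with h | h
    · rw [abs_of_nonneg (sub_nonneg.2 h)]
      exact le_iSup₂_of_le a ha (le_iSup₂_of_le b hb le_rfl)
    · rw [abs_of_nonpos (sub_nonpos.2 h), neg_sub]
      exact le_iSup₂_of_le b hb (le_iSup₂_of_le a ha le_rfl)
  · rw [← Real.volume_Icc]
    exact measure_mono (hA.out hb ha)

theorem Set.OrdConnected.volume_Ici_inter_sub_self {A : Set ℝ} (hA : A.OrdConnected) :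
    volume (Ici 0 ∩ (A - A)) = volume A := by
  have hconv := convex_iff_ordConnected.2 hA
  have hD : (Ici 0 ∩ (A - A)).OrdConnected :=
    ordConnected_Ici.inter (convex_iff_ordConnected.1 (hconv.sub hconv))
  rw [hD.volume_eq_iSup_sub, hA.volume_eq_iSup_sub]
  refine le_antisymm (iSup₂_le fun z hz ↦ iSup₂_le fun w hw ↦ ?_)
    (iSup₂_le fun a ha ↦ iSup₂_le fun b hb ↦ ?_)
  · obtain ⟨-, a, ha, b, hb, rfl⟩ := hz
    exact le_iSup₂_of_le a ha (le_iSup₂_of_le b hb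
      (ENNReal.ofReal_le_ofReal (sub_le_self _ hw.1)))
  · rcases le_total b a with h | h
    · refine le_iSup₂_of_le (a - b) ⟨sub_nonneg.2 h, a, ha, b, hb, rfl⟩
        (le_iSup₂_of_le 0 ⟨mem_Ici.2 le_rfl, a, ha, a, ha, sub_self a⟩ ?_)
      rw [sub_zero]
    · rw [ENNReal.ofReal_of_nonpos (sub_nonpos.2 h)]
      exact zero_le

theorem MeasureTheory.lintegral_eq_lintegral_meas_ofReal_lt {β : Type*} [MeasurableSpace β]
    {μ : Measure β} {g : β → ℝ≥0∞} (hg : AEMeasurable g μ) :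
    ∫⁻ x, g x ∂μ = ∫⁻ t in Ioi 0, μ {x | ENNReal.ofReal t < g x} := by
  by_cases htop : μ {x | g x = ⊤} = 0
  · have hfin : ∀ᵐ x ∂μ, g x ≠ ⊤ := measure_eq_zero_iff_ae_notMem.1 htop
    calc ∫⁻ x, g x ∂μ = ∫⁻ x, ENNReal.ofReal (g x).toReal ∂μ :=
          lintegral_congr_ae (hfin.mono fun x hx ↦ (ENNReal.ofReal_toReal hx).symm)
      _ = ∫⁻ t in Ioi 0, μ {x | t < (g x).toReal} :=
          lintegral_eq_lintegral_meas_lt μ (ae_of_all _ fun _ ↦ ENNReal.toReal_nonneg)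
            hg.ennreal_toReal
      _ = ∫⁻ t in Ioi 0, μ {x | ENNReal.ofReal t < g x} :=
          setLIntegral_congr_fun measurableSet_Ioi fun t ht ↦ measure_congr <|
            hfin.mono fun x hx ↦ propext (ENNReal.ofReal_lt_iff_lt_toReal (le_of_lt ht) hx).symm
  · refine (lintegral_eq_top_of_measure_eq_top_ne_zero hg htop).trans (top_le_iff.1 ?_).symm
    calc ⊤ = ∫⁻ _ in Ioi (0 : ℝ), μ {x | g x = ⊤} := by
          rw [setLIntegral_const, Real.volume_Ioi, ENNReal.mul_top htop]
      _ ≤ ∫⁻ t in Ioi 0, μ {x | ENNReal.ofReal t < g x} :=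
          lintegral_mono fun t ↦ measure_mono fun x hx ↦ by
            simp only [mem_ofPred_eq] at hx ⊢
            rw [hx]
            exact ENNReal.ofReal_lt_top

theorem MeasureTheory.lintegral_eq_of_meas_ofReal_lt_eq {β : Type*} [MeasurableSpace β]
    {μ : Measure β} {g h : β → ℝ≥0∞} (hg : AEMeasurable g μ) (hh : AEMeasurable h μ)
    (hgh : ∀ t : ℝ, 0 ≤ t → μ {x | ENNReal.ofReal t < g x} = μ {x | ENNReal.ofReal t < h x}) :
    ∫⁻ x, g x ∂μ = ∫⁻ x, h x ∂μ := by
  rw [lintegral_eq_lintegral_meas_ofReal_lt hg, lintegral_eq_lintegral_meas_ofReal_lt hh]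
  exact setLIntegral_congr_fun measurableSet_Ioi fun t ht ↦ hgh t (le_of_lt ht)

theorem volume_setOf_ofReal_lt_fstar {α : ℝ} (hα : α < 0) {f : ℝ → ℝ} (hf : AlphaConcave1 α f)
    {s : ℝ} (hs : 0 ≤ s) : volume {z | ENNReal.ofReal s < fstar f z} = volume {z | s < f z} := by
  rw [setOf_ofReal_lt_fstar f hs, (hf.ordConnected_setOf_lt hα hs).volume_Ici_inter_sub_self]

theorem fstar_properties_general (α : ℝ) (hα : α < 0) (f : ℝ → ℝ)
    (hf : AlphaConcave1 α f) :
    (∀ x y : ℝ, ∀ t : ℝ, t ∈ Set.Icc (0 : ℝ) 1 →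
        eMalpha α (fstar f x) (fstar f y) t ≤ fstar f (t * x + (1 - t) * y)) ∧
    (∀ s : ℝ, 0 ≤ s →
        volume {z : ℝ | ENNReal.ofReal s < fstar f z} =
          volume {z : ℝ | s < f z}) ∧
    (∫⁻ z, fstar f z = ∫⁻ z, ENNReal.ofReal (f z)) ∧
    (∀ z : ℝ, diffAlpha1 α f z ≤ ediffAlpha1 α (fstar f) z) := by
  have hconc : EAlphaConcave α (fstar f) := fstar_eAlphaConcave hα hf
  refine ⟨hconc, fun s hs ↦ volume_setOf_ofReal_lt_fstar hα hf hs, ?_,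
    diffAlpha1_le_ediffAlpha1_fstar hα f⟩
  refine lintegral_eq_of_meas_ofReal_lt_eq (hconc.measurable hα).aemeasurable
    ((hf.eAlphaConcave_ofReal hα).measurable hα).aemeasurable fun s hs ↦ ?_
  simp only [ENNReal.ofReal_lt_ofReal_iff_of_nonneg hs]
  exact volume_setOf_ofReal_lt_fstar hα hf hs

/-- Properties of the rearrangement `f*` of a nonnegative `α`-concave `f ∈ L¹(ℝ)`
(`α < 0`): (i) `f*` is `α`-concave; (ii) `f*` and `f` are equimeasurable, and
consequently have equal integrals; (iii) `Δ_α f* ≥ Δ_α f` pointwise. -/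
theorem fstar_properties (α : ℝ) (hα : α < 0) (f : ℝ → ℝ)
    (hf0 : ∀ x, 0 ≤ f x) (hf : AlphaConcave1 α f) (hint : Integrable f) :
    (∀ x y : ℝ, ∀ t : ℝ, t ∈ Set.Icc (0 : ℝ) 1 →
        eMalpha α (fstar f x) (fstar f y) t ≤ fstar f (t * x + (1 - t) * y)) ∧
    (∀ s : ℝ, 0 ≤ s →
        volume {z : ℝ | ENNReal.ofReal s < fstar f z} =
          volume {z : ℝ | s < f z}) ∧
    (∫⁻ z, fstar f z = ∫⁻ z, ENNReal.ofReal (f z)) ∧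
    (∀ z : ℝ, diffAlpha1 α f z ≤ ediffAlpha1 α (fstar f) z) :=
  fstar_properties_general α hα f hf
end
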